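/- arXiv:1806.00651 — 2 statements merged into one kernel-verified Lean document; each statement's English description precedes it below -/
import Mathlib

section
/- For j ≥ 1 and r ≥ 0, c_j^{(r)}(n) = Σ_{i=0}^{r} C(r,i) c_{j+i}(n) for all n ≥ 1. -/
/-- `d j n`: number of ordered factorisations of `n` into `j` positive factors. -/
noncomputable def d (j n : ℕ) : ℕ :=
  Nat.card {f : Fin j → ℕ // (∀ i, 1 ≤ f i) ∧ ∏ i, f i = n}

/-- `c j n`: number of ordered factorisations of `n` into `j` factors each `≥ 2`. -/
noncomputable def c (j n : ℕ) : ℕ :=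
  Nat.card {f : Fin j → ℕ // (∀ i, 2 ≤ f i) ∧ ∏ i, f i = n}

/-- the associated divisor function `c_j^{(r)}`. -/
noncomputable def cr (j : ℕ) : ℕ → ℕ → ℕ
  | 0, n => c j n
  | r + 1, n => ∑ m ∈ n.divisors, cr j r m

/-! Work in the Dirichlet ring of `ℕ`-valued arithmetic functions and let `P` be the indicator
of `n ≥ 2`, i.e. `ζ - ε`. An ordered factorisation into `j` factors `≥ 2` is a term of the
`j`-fold Dirichlet convolution of `P`, so `c_j = P ^ j`, while summing over divisors is
convolution with `ζ = 1 + P`. Hence `c_j^{(r)} = (1 + P) ^ r * P ^ j`, and the binomial theorem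
gives the formula. -/

open Finset ArithmeticFunction
open scoped ArithmeticFunction.zeta

theorem Nat.sum_finMulAntidiag_succ {M : Type*} [AddCommMonoid M] (d n : ℕ)
    (F : (Fin (d + 1) → ℕ) → M) :
    ∑ f ∈ Nat.finMulAntidiag (d + 1) n, F f =
      ∑ x ∈ n.divisorsAntidiagonal, ∑ g ∈ Nat.finMulAntidiag d x.2, F (Fin.cons x.1 g) := by
  rw [Finset.sum_sigma']
  refine Finset.sum_nbij' (fun f => ⟨(f 0, ∏ i, Fin.tail f i), Fin.tail f⟩)
    (fun p => Fin.cons p.1.1 p.2) ?_ ?_ ?_ ?_ ?_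
  · intro f hf
    simp only [Nat.mem_finMulAntidiag, Fin.prod_univ_succ] at hf
    simp only [mem_sigma, Nat.mem_divisorsAntidiagonal, Nat.mem_finMulAntidiag]
    exact ⟨hf, trivial, right_ne_zero_of_mul (hf.1 ▸ hf.2)⟩
  · rintro ⟨⟨a, b⟩, g⟩ h
    simp only [mem_sigma, Nat.mem_divisorsAntidiagonal, Nat.mem_finMulAntidiag] at h
    simp only [Nat.mem_finMulAntidiag, Fin.prod_cons, h.2.1]
    exact h.1
  · exact fun f _ => Fin.cons_self_tail f
  · rintro ⟨⟨a, b⟩, g⟩ h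
    simp only [mem_sigma, Nat.mem_divisorsAntidiagonal, Nat.mem_finMulAntidiag] at h
    simp [h.2.1]
  · intro f _
    simp

namespace ArithmeticFunction

variable {R : Type*}

instance [Zero R] : IsZeroApply (ArithmeticFunction R) ℕ R := ⟨fun _ => rfl⟩

instance [AddMonoid R] : IsAddApply (ArithmeticFunction R) ℕ R := ⟨fun _ _ _ => rfl⟩

theorem natCast_mul_apply [Semiring R] (k : ℕ) (f : ArithmeticFunction R) (n : ℕ) :
    ((k : ArithmeticFunction R) * f) n = k * f n := by
  induction k with
  | zero => simp
  | succ k ih => rw [Nat.cast_succ, add_mul, one_mul, add_apply, ih, Nat.cast_succ, add_mul, one_mul]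

theorem pow_apply_eq_sum_finMulAntidiag [CommSemiring R] (f : ArithmeticFunction R) (d n : ℕ) :
    (f ^ d) n = ∑ g ∈ Nat.finMulAntidiag d n, ∏ i, f (g i) := by
  induction d generalizing n with
  | zero =>
    by_cases hn : n = 1
    · simp [hn, Nat.finMulAntidiag_one]
    · simp [hn, Nat.finMulAntidiag_zero_left hn]
  | succ d ih =>
    simp only [pow_succ', mul_apply, ih, Finset.mul_sum, Nat.sum_finMulAntidiag_succ,
      Fin.prod_univ_succ, Fin.cons_zero, Fin.cons_succ]

end ArithmeticFunction

def zetaGeTwo : ArithmeticFunction ℕ :=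
  ⟨fun n => if 2 ≤ n then 1 else 0, rfl⟩

theorem zetaGeTwo_apply (n : ℕ) : zetaGeTwo n = if 2 ≤ n then 1 else 0 := rfl

theorem zeta_eq_one_add_zetaGeTwo : (ζ : ArithmeticFunction ℕ) = 1 + zetaGeTwo := by
  ext n
  rw [ArithmeticFunction.add_apply, zeta_apply, one_apply, zetaGeTwo_apply]
  rcases n with _ | _ | n <;> simp

theorem c_eq_card_filter_finMulAntidiag (j n : ℕ) :
    c j n = #{f ∈ Nat.finMulAntidiag j n | ∀ i, 2 ≤ f i} := by
  rw [c, ← Nat.card_eq_finsetCard]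
  refine Nat.card_congr (Equiv.subtypeEquivRight fun f => ?_)
  simp only [mem_filter, Nat.mem_finMulAntidiag]
  constructor
  · rintro ⟨h2, rfl⟩
    exact ⟨⟨rfl, prod_ne_zero_iff.2 fun i _ => (two_pos.trans_le (h2 i)).ne'⟩, h2⟩
  · rintro ⟨⟨hprod, -⟩, h2⟩
    exact ⟨h2, hprod⟩

theorem c_eq_zetaGeTwo_pow_apply (j n : ℕ) : c j n = (zetaGeTwo ^ j) n := by
  simp only [c_eq_card_filter_finMulAntidiag, pow_apply_eq_sum_finMulAntidiag, zetaGeTwo_apply,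
    prod_boole, mem_univ, true_implies, sum_boole, Nat.cast_id]

theorem cr_eq_zeta_pow_mul_apply (j r n : ℕ) : cr j r n = (ζ ^ r * zetaGeTwo ^ j) n := by
  induction r generalizing n with
  | zero => simp [cr, c_eq_zetaGeTwo_pow_apply]
  | succ r ih => simp only [cr, ih, pow_succ', mul_assoc, zeta_mul_apply]

theorem stmt_14_general (j r n : ℕ) :
    cr j r n = ∑ i ∈ Finset.range (r + 1), r.choose i * c (j + i) n := by
  rw [cr_eq_zeta_pow_mul_apply, zeta_eq_one_add_zetaGeTwo, add_comm, add_pow, sum_mul,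
    _root_.sum_apply]
  refine sum_congr rfl fun i _ => ?_
  rw [one_pow, mul_one, mul_right_comm, ← pow_add, mul_comm, natCast_mul_apply,
    c_eq_zetaGeTwo_pow_apply, add_comm j i, Nat.cast_id]

theorem stmt_14 (j r n : ℕ) (hj : 1 ≤ j) (hn : 1 ≤ n) :
    cr j r n = ∑ i ∈ Finset.range (r + 1), r.choose i * c (j + i) n :=
  stmt_14_general j r n
end

section
/- For n ≥ 2, the quantity N_n := Σ_{j=1}^{Ω(n)} c_j(n)·(c_j(n) + c_{j+1}(n)) equals 1 if and only if n is prime. -/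
lemma finite_factorizations (j : ℕ) {n : ℕ} (hn : n ≠ 0) :
    Finite {f : Fin j → ℕ // (∀ i, 2 ≤ f i) ∧ ∏ i, f i = n} := by
  refine (Set.finite_Iic (fun _ => n)).subset fun f hf i => ?_
  exact Nat.le_of_dvd (Nat.pos_of_ne_zero hn)
    (hf.2 ▸ Finset.dvd_prod_of_mem f (Finset.mem_univ i))

lemma c_one_of_two_le {n : ℕ} (hn : 2 ≤ n) : c 1 n = 1 := by
  rw [c, Nat.card_eq_one_iff_exists]
  refine ⟨⟨fun _ => n, fun _ => hn, by simp⟩, fun ⟨f, _, hf⟩ => ?_⟩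
  ext i
  simpa [Subsingleton.elim i 0] using hf

lemma c_two_eq_zero_iff {n : ℕ} (hn : 2 ≤ n) : c 2 n = 0 ↔ n.Prime := by
  have := finite_factorizations 2 (n := n) (by omega)
  rw [c, Nat.card_eq_zero, or_iff_left (not_infinite_iff_finite.mpr this), isEmpty_subtype]
  simp only [Fin.forall_fin_two, Fin.prod_univ_two, not_and]
  constructor
  · intro h
    by_contra hnp
    obtain ⟨a, b, ha, hb, rfl⟩ := (Nat.not_prime_iff_exists_mul_eq hn).mp hnp
    have ha0 : 0 < a := Nat.pos_of_mul_pos_right (by omega : 0 < a * b)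
    have hb0 : 0 < b := Nat.pos_of_mul_pos_left (by omega : 0 < a * b)
    exact h ![a, b]
      ⟨(Nat.lt_mul_iff_one_lt_left hb0).mp hb, (Nat.lt_mul_iff_one_lt_right ha0).mp ha⟩ rfl
  · rintro hp f ⟨h0, h1⟩ rfl
    exact Nat.not_prime_mul (by omega) (by omega) hp

theorem stmt_18 (n : ℕ) (hn : 2 ≤ n) :
    (∑ j ∈ Finset.Icc 1 n.primeFactorsList.length,
        c j n * (c j n + c (j + 1) n)) = 1 ↔ n.Prime := by
  constructor
  · intro hsum
    have hΩ : 1 ≤ n.primeFactorsList.length :=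
      List.length_pos_iff.mpr fun h => by
        rcases (Nat.primeFactorsList_eq_nil n).mp h with h | h <;> omega
    have hfirst := Finset.single_le_sum (f := fun j => c j n * (c j n + c (j + 1) n))
      (fun _ _ => Nat.zero_le _) (Finset.left_mem_Icc.mpr hΩ)
    rw [← c_two_eq_zero_iff hn]
    simp only [c_one_of_two_le hn, Nat.reduceAdd, one_mul] at hfirst
    omega
  · intro hp
    simp [Nat.primeFactorsList_prime hp, c_one_of_two_le hn, (c_two_eq_zero_iff hn).mpr hp]
end
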